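/- arXiv:0806.3249 — 7 statements merged into one kernel-verified Lean document; each statement's English description precedes it below -/
import Mathlib

section
/- Let M be a matroid with finite ground set E, |E| ≥ 2, which is 2-connected in the sense that for every pair of distinct elements e,f ∈ E there exists a circuit of M containing both e and f. Let d(2) be the number of 2-element circuits of M and d*(2) the number of 2-element circuits of the dual matroid M*. If d(2) + d*(2) ≤ 1, then there exists an element e ∈ E such that both the deletion M∖e and the contraction M/e are 2-connected in the same sense. -/
open Matroid

/-- A circuit of a matroid: a minimal dependent set, i.e. a dependent set all of whose
proper subsets are independent. -/
def Matroid.IsCircuit' {α : Type*} (M : Matroid α) (C : Set α) : Prop :=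
  M.Dep C ∧ ∀ D : Set α, D ⊂ C → M.Indep D

/-- A matroid (with at least 2 elements) is 2-connected if every pair of distinct
elements of the ground set lies in a common circuit. -/
def Matroid.TwoConn {α : Type*} (M : Matroid α) : Prop :=
  ∀ ⦃e f : α⦄, e ∈ M.E → f ∈ M.E → e ≠ f →
    ∃ C : Set α, M.IsCircuit' C ∧ e ∈ C ∧ f ∈ C

/-- Deletion `M ∖ X`: the restriction of `M` to `M.E \ X`. -/
def Matroid.del {α : Type*} (M : Matroid α) (X : Set α) : Matroid α :=
  M ↾ (M.E \ X)

/-- Contraction `M / X`, defined by duality: `M / X = (M✶ ∖ X)✶`. -/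
def Matroid.con {α : Type*} (M : Matroid α) (X : Set α) : Matroid α :=
  ((M✶).del X)✶

/-!
Suppose no element works. Then for every `g` one of `M ＼ g`, `M ／ g` has a proper separator
`A`, and since `M` is connected this can be pushed down: if `|A| ≥ 2` and `a ∈ A`, then either
`a` is a coloop of `M ＼ g`, or some separator of `M ＼ a` or `M ／ a` lies inside `A \ {a}`
(strong circuit elimination; for `M ／ g` dualize). A singleton separator `{p}` of `M ＼ g` makes
`{g, p}` a series pair. Hence each side of a separation at `g` contains, together with `g`, a
two-element circuit or cocircuit. As `d(2) + d*(2) ≤ 1` the two coincide, so their element other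
than `g` lies on both sides.
-/

open Set

namespace Matroid

variable {α : Type*} {M : Matroid α} {A C C₁ C₂ S T₁ T₂ : Set α} {a e f p x z : α}

lemma del_eq_delete (M : Matroid α) (X : Set α) : M.del X = M ＼ X := rfl

lemma con_eq_contract (M : Matroid α) (X : Set α) : M.con X = M ／ X := rfl

lemma isCircuit'_iff : M.IsCircuit' C ↔ M.IsCircuit C := by
  rw [isCircuit_iff_forall_ssubset]
  exact Iff.rfl

lemma twoConn_iff : M.TwoConn ↔
    ∀ ⦃e f⦄, e ∈ M.E → f ∈ M.E → e ≠ f → ∃ C, M.IsCircuit C ∧ e ∈ C ∧ f ∈ C := by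
  simp only [TwoConn, isCircuit'_iff]

lemma deleteElem_isCircuit_iff : (M ＼ {e}).IsCircuit C ↔ M.IsCircuit C ∧ e ∉ C := by
  rw [delete_isCircuit_iff, disjoint_singleton_right]

/-- Transitivity of the relation "lying in a common circuit". -/
lemma IsCircuit.exists_isCircuit_mem_mem [M.Finitary] (hC₁ : M.IsCircuit C₁)
    (hC₂ : M.IsCircuit C₂) (hx : x ∈ C₁) (hz : z ∈ C₂) (hmeet : (C₁ ∩ C₂).Nonempty) :
    ∃ C, M.IsCircuit C ∧ x ∈ C ∧ z ∈ C := by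
  induction hn : (C₂ \ C₁).ncard using Nat.strong_induction_on generalizing C₂ with
  | _ n ih =>
  by_cases hxC₂ : x ∈ C₂
  · exact ⟨C₂, hC₂, hxC₂, hz⟩
  obtain ⟨e, he₁, he₂⟩ := hmeet
  obtain ⟨C₃, hC₃sub, hC₃, hxC₃⟩ := hC₁.strong_elimination hC₂ he₁ he₂ hx hxC₂
  by_cases hzC₃ : z ∈ C₃
  · exact ⟨C₃, hC₃, hxC₃, hzC₃⟩
  obtain ⟨g, hgC₃, hgC₁⟩ : ∃ g ∈ C₃, g ∉ C₁ := not_subset.1 fun hsub ↦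
    (hC₃sub ((hC₃.eq_of_subset_isCircuit hC₁ hsub) ▸ he₁)).2 rfl
  have hgC₂ : g ∈ C₂ := (hC₃sub hgC₃).1.resolve_left hgC₁
  obtain ⟨C₄, hC₄sub, hC₄, hzC₄⟩ := hC₂.strong_elimination hC₃ hgC₂ hgC₃ hz hzC₃
  have hgC₄ : g ∉ C₄ := fun h ↦ (hC₄sub h).2 rfl
  have hC₄C₁C₂ : C₄ ⊆ C₁ ∪ C₂ := fun y hy ↦
    (hC₄sub hy).1.elim Or.inr fun hyC₃ ↦ (hC₃sub hyC₃).1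
  -- `C₄` has lost `g ∈ C₂ \ C₁`, which makes the induction go through.
  have hssub : C₄ \ C₁ ⊂ C₂ \ C₁ :=
    (ssubset_iff_of_subset (s := C₄ \ C₁) (t := C₂ \ C₁) fun y hy ↦
      ⟨(hC₄C₁C₂ hy.1).resolve_left hy.2, hy.2⟩).2
      ⟨g, ⟨hgC₂, hgC₁⟩, fun h ↦ hgC₄ h.1⟩
  have hlt : (C₄ \ C₁).ncard < n := hn ▸ ncard_lt_ncard hssub hC₂.finite.sdiff
  refine ih _ hlt hC₄ hzC₄ ?_ rfl
  by_contra hdisj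
  have hC₄C₂ : C₄ ⊆ C₂ := fun y hy ↦
    (hC₄C₁C₂ hy).resolve_left fun hy₁ ↦ hdisj ⟨y, hy₁, hy⟩
  exact hgC₄ (hC₄.eq_of_subset_isCircuit hC₂ hC₄C₂ ▸ hgC₂)

def IsSeparator (M : Matroid α) (S : Set α) : Prop :=
  S ⊆ M.E ∧ ∀ ⦃C⦄, M.IsCircuit C → C ⊆ S ∨ Disjoint C S

def IsProperSeparator (M : Matroid α) (S : Set α) : Prop :=
  M.IsSeparator S ∧ S.Nonempty ∧ (M.E \ S).Nonempty

lemma IsSeparator.subset_of_mem (hS : M.IsSeparator S) (hC : M.IsCircuit C) (hxC : x ∈ C)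
    (hxS : x ∈ S) : C ⊆ S :=
  (hS.2 hC).resolve_right (not_disjoint_iff.2 ⟨x, hxC, hxS⟩)

lemma IsSeparator.compl (hS : M.IsSeparator S) : M.IsSeparator (M.E \ S) :=
  ⟨sdiff_subset, fun _ hC ↦ (hS.2 hC).symm.imp (fun h ↦ subset_sdiff.2 ⟨hC.subset_ground, h⟩)
    fun h ↦ disjoint_sdiff_right.mono_left h⟩

lemma IsProperSeparator.compl (hS : M.IsProperSeparator S) :
    M.IsProperSeparator (M.E \ S) :=
  ⟨hS.1.compl, hS.2.2, by rw [sdiff_sdiff_cancel_left hS.1.1]; exact hS.2.1⟩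

lemma IsSeparator.dual (hS : M.IsSeparator S) : M✶.IsSeparator S := by
  refine ⟨hS.1, fun K hK ↦ ?_⟩
  by_contra! h
  obtain ⟨y, hyK, hyS⟩ := not_subset.1 h.1
  obtain ⟨x, hxK, hxS⟩ := not_disjoint_iff.1 h.2
  obtain ⟨B, hB, hKB⟩ :=
    Coindep.exists_subset_compl_isBase (hK.ssubset_indep (sdiff_singleton_ssubset.2 hxK))
  have hyB : y ∉ B := (hKB ⟨hyK, fun h ↦ hyS (h ▸ hxS)⟩).2
  have hC := hB.fundCircuit_isCircuit (hK.subset_ground hyK) hyB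
  -- The fundamental circuit of `y` meets `K` only in `y` and possibly `x`; by orthogonality it
  -- contains `x`, so it crosses `S`.
  have hxC : x ∈ M.fundCircuit y B := by
    by_contra hxC
    refine hC.inter_isCocircuit_ne_singleton hK (eq_singleton_iff_unique_mem.2
      ⟨⟨M.mem_fundCircuit y B, hyK⟩, fun z ⟨hzC, hzK⟩ ↦ ?_⟩)
    refine (M.fundCircuit_subset_insert y B hzC).resolve_right fun hzB ↦ ?_
    exact (hKB ⟨hzK, fun h ↦ hxC (h ▸ hzC)⟩).2 hzB
  exact hyS (hS.subset_of_mem hC hxC hxS (M.mem_fundCircuit y B))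

lemma isSeparator_dual_iff : M✶.IsSeparator S ↔ M.IsSeparator S :=
  ⟨fun h ↦ M.dual_dual ▸ h.dual, IsSeparator.dual⟩

lemma isProperSeparator_dual_iff : M✶.IsProperSeparator S ↔ M.IsProperSeparator S := by
  simp only [IsProperSeparator, isSeparator_dual_iff, dual_ground]

lemma IsProperSeparator.not_twoConn (hS : M.IsProperSeparator S) : ¬ M.TwoConn := by
  obtain ⟨hS, ⟨x, hx⟩, y, hyE, hyS⟩ := hS
  intro h
  obtain ⟨C, hC, hxC, hyC⟩ := twoConn_iff.1 h (hS.1 hx) hyE fun h ↦ hyS (h ▸ hx)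
  exact hyS (hS.subset_of_mem hC hxC hx hyC)

lemma not_twoConn_iff [M.Finitary] : ¬ M.TwoConn ↔ ∃ S, M.IsProperSeparator S := by
  refine ⟨fun h ↦ ?_, fun ⟨S, hS⟩ ↦ hS.not_twoConn⟩
  simp only [twoConn_iff, not_forall, not_exists, not_and] at h
  obtain ⟨x, y, hx, hy, hxy, hno⟩ := h
  -- the connected component of `x`
  refine ⟨insert x {z | ∃ C, M.IsCircuit C ∧ x ∈ C ∧ z ∈ C},
    ⟨insert_subset hx fun z ⟨C, hC, _, hzC⟩ ↦ hC.subset_ground hzC, fun C hC ↦ ?_⟩,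
    insert_nonempty _ _, y, hy, ?_⟩
  · refine or_iff_not_imp_right.2 fun hmeet z hzC ↦ mem_insert_of_mem _ ?_
    obtain ⟨w, hwC, rfl | ⟨D, hD, hxD, hwD⟩⟩ := not_disjoint_iff.1 hmeet
    · exact ⟨C, hC, hwC, hzC⟩
    · exact hD.exists_isCircuit_mem_mem hC hxD hzC ⟨w, hwD, hwC⟩
  · rintro (rfl | ⟨C, hC, hxC, hyC⟩)
    exacts [hxy rfl, hno C hC hxC hyC]

lemma twoConn_dual_iff [M.Finite] : M✶.TwoConn ↔ M.TwoConn := by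
  rw [← not_iff_not, not_twoConn_iff, not_twoConn_iff]
  simp only [isProperSeparator_dual_iff]

/-- `A` is one side of a separation of `M ＼ e` or of `M ／ e`. -/
def IsMinorSeparator (M : Matroid α) (e : α) (A : Set α) : Prop :=
  (M ＼ {e}).IsProperSeparator A ∨ (M ／ {e}).IsProperSeparator A

lemma IsMinorSeparator.subset_ground (hA : M.IsMinorSeparator e A) : A ⊆ M.E \ {e} :=
  hA.elim (·.1.1) (·.1.1)

lemma IsMinorSeparator.nonempty (hA : M.IsMinorSeparator e A) : A.Nonempty :=
  hA.elim (·.2.1) (·.2.1)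

lemma IsMinorSeparator.compl (hA : M.IsMinorSeparator e A) :
    M.IsMinorSeparator e ((M.E \ {e}) \ A) :=
  hA.imp IsProperSeparator.compl IsProperSeparator.compl

lemma IsMinorSeparator.mem_ground (hM : M.TwoConn) (hA : M.IsMinorSeparator e A) : e ∈ M.E := by
  by_contra he
  rcases hA with hA | hA
  · exact hA.not_twoConn (by rwa [deleteElem_eq_self he])
  · exact hA.not_twoConn (by rwa [contractElem_eq_self he])

lemma isMinorSeparator_dual_iff : M✶.IsMinorSeparator e A ↔ M.IsMinorSeparator e A := by
  rw [IsMinorSeparator, IsMinorSeparator, ← dual_contract, ← dual_delete,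
    isProperSeparator_dual_iff, isProperSeparator_dual_iff, or_comm]

lemma isCocircuit_pair_of_isSeparator_singleton (hM : M.TwoConn) (hf : f ∈ M.E)
    (hp : (M ＼ {f}).IsSeparator {p}) : M.IsCocircuit {f, p} := by
  obtain ⟨hpE, hpf⟩ : p ∈ M.E \ {f} := hp.1 rfl
  obtain ⟨D, hD, hfD, hpD⟩ := twoConn_iff.1 hM hf hpE fun h ↦ hpf h.symm
  -- otherwise eliminating `f` from `D` and `C` would leave the loop `{p}` inside `D`
  have hp_of_f : ∀ C, M.IsCircuit C → f ∈ C → p ∈ C := by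
    intro C hC hfC
    by_contra hpC
    obtain ⟨C', hC'sub, hC', hpC'⟩ := hD.strong_elimination hC hfD hfC hpD hpC
    have hfC' : f ∉ C' := fun h ↦ (hC'sub h).2 rfl
    have hC'p : C' ⊆ {p} :=
      hp.subset_of_mem (deleteElem_isCircuit_iff.2 ⟨hC', hfC'⟩) hpC' rfl
    exact hfC' (hC'.eq_of_subset_isCircuit hD (hC'p.trans (singleton_subset_iff.2 hpD)) ▸ hfD)
  have hdep : M✶.Dep {f, p} := by
    refine dual_dep_iff_forall.2 ⟨fun B hB ↦ ?_, pair_subset hf hpE⟩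
    by_contra hdisj
    have hfB : f ∉ B := fun h ↦ hdisj ⟨f, mem_insert _ _, h⟩
    have hpB : p ∉ B := fun h ↦ hdisj ⟨p, mem_insert_of_mem _ rfl, h⟩
    have hpC := hp_of_f _ (hB.fundCircuit_isCircuit hf hfB) (M.mem_fundCircuit f B)
    exact (M.fundCircuit_subset_insert f B hpC).elim hpf hpB
  -- a cocircuit inside `{f, p}` cannot meet the circuit `D` in a single element
  obtain ⟨K, hKfp, hK⟩ := hdep.exists_isCircuit_subset
  have hDK : D ∩ K = K := inter_eq_right.2 (hKfp.trans (pair_subset hfD hpD))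
  obtain rfl | rfl | rfl := hK.nonempty.subset_pair_iff_eq.1 hKfp
  · exact absurd hDK (hD.inter_isCocircuit_ne_singleton hK)
  · exact absurd hDK (hD.inter_isCocircuit_ne_singleton hK)
  · exact hK

lemma IsMinorSeparator.isCircuit_or_isCocircuit_pair [M.Finite] (hM : M.TwoConn)
    (hA : M.IsMinorSeparator f {p}) : M.IsCircuit {f, p} ∨ M.IsCocircuit {f, p} := by
  have hf := hA.mem_ground hM
  rcases hA with hA | hA
  · exact Or.inr (isCocircuit_pair_of_isSeparator_singleton hM hf hA.1)
  · rw [← isProperSeparator_dual_iff, dual_contract] at hA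
    have := isCocircuit_pair_of_isSeparator_singleton (twoConn_dual_iff.2 hM) hf hA.1
    rw [IsCocircuit, dual_dual] at this
    exact Or.inl this

lemma IsSeparator.subset_of_delete (hM : M.TwoConn) (hf : f ∈ M.E)
    (hA : (M ＼ {f}).IsSeparator A) (hC : M.IsCircuit C) (hCA : C ⊆ A) (haC : a ∈ C)
    (hS : (M ＼ {a}).IsSeparator S) (hfS : f ∉ S) : S ⊆ A := by
  intro b hbS
  by_contra hbA
  obtain ⟨hbE, -⟩ : b ∈ M.E \ {a} := hS.1 hbS
  obtain ⟨D, hD, hfD, hbD⟩ := twoConn_iff.1 hM hf hbE fun h ↦ hfS (h ▸ hbS)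
  have haD : a ∈ D := by
    by_contra haD
    exact hfS (hS.subset_of_mem (deleteElem_isCircuit_iff.2 ⟨hD, haD⟩) hbD hbS hfD)
  obtain ⟨D', hD'sub, hD', hbD'⟩ := hD.strong_elimination hC haD haC hbD fun h ↦ hbA (hCA h)
  have haD' : a ∉ D' := fun h ↦ (hD'sub h).2 rfl
  have hD'S : D' ⊆ S := hS.subset_of_mem (deleteElem_isCircuit_iff.2 ⟨hD', haD'⟩) hbD' hbS
  have hD'A : Disjoint D' A :=
    (hA.2 (deleteElem_isCircuit_iff.2 ⟨hD', fun h ↦ hfS (hD'S h)⟩)).resolve_left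
      fun h ↦ hbA (h hbD')
  have hD'D : D' ⊆ D := fun z hz ↦
    (hD'sub hz).1.resolve_right fun hzC ↦ hD'A.notMem_of_mem_left hz (hCA hzC)
  exact haD' (hD'.eq_of_subset_isCircuit hD hD'D ▸ haD)

lemma IsSeparator.subset_of_contract (hM : M.TwoConn) (hA : (M ＼ {f}).IsSeparator A)
    (ha : a ∈ A) (hS : (M ／ {a}).IsSeparator S) (hfS : f ∉ S) : S ⊆ A := by
  intro b hbS
  by_contra hbA
  obtain ⟨hbE, hba⟩ : b ∈ M.E \ {a} := hS.1 hbS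
  obtain ⟨haE, haf⟩ : a ∈ M.E \ {f} := hA.1 ha
  obtain ⟨D, hD, haD, hbD⟩ := twoConn_iff.1 hM haE hbE fun h ↦ hba h.symm
  have hfD : f ∈ D := by
    by_contra hfD
    exact hbA (hA.subset_of_mem (deleteElem_isCircuit_iff.2 ⟨hD, hfD⟩) haD ha hbD)
  have hDa := hD.contractElem_isCircuit ⟨a, haD, b, hbD, fun h ↦ hba h.symm⟩ haD
  exact hfS (hS.subset_of_mem hDa ⟨hbD, hba⟩ hbS ⟨hfD, fun h ↦ haf h.symm⟩)

lemma exists_isMinorSeparator_ssubset_of_delete (hM : M.TwoConn) (hf : f ∈ M.E)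
    (hsep : ∀ g ∈ M.E, ∃ S, M.IsMinorSeparator g S)
    (hA : (M ＼ {f}).IsProperSeparator A) (hA2 : 1 < A.ncard) :
    ∃ g A', insert g A' ⊆ insert f A ∧ A' ⊂ A ∧ M.IsMinorSeparator g A' := by
  obtain ⟨a, ha⟩ := hA.2.1
  obtain ⟨a', ha', ha'a⟩ := exists_ne_of_one_lt_ncard hA2 a
  obtain ⟨haE, -⟩ : a ∈ M.E \ {f} := hA.1.1 ha
  by_cases hcirc : ∃ C, M.IsCircuit C ∧ f ∉ C ∧ a ∈ C
  · obtain ⟨C, hC, hfC, haC⟩ := hcirc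
    have hCA := hA.1.subset_of_mem (deleteElem_isCircuit_iff.2 ⟨hC, hfC⟩) haC ha
    obtain ⟨S₀, hS₀⟩ := hsep a haE
    obtain ⟨S, hS, hfS⟩ : ∃ S, M.IsMinorSeparator a S ∧ f ∉ S := by
      by_cases hfS₀ : f ∈ S₀
      exacts [⟨_, hS₀.compl, fun h ↦ h.2 hfS₀⟩, ⟨S₀, hS₀, hfS₀⟩]
    have hSA : S ⊆ A := hS.elim (fun h ↦ IsSeparator.subset_of_delete hM hf hA.1 hC hCA haC h.1 hfS)
      fun h ↦ IsSeparator.subset_of_contract hM hA.1 ha h.1 hfS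
    have haS : a ∉ S := fun h ↦ (hS.subset_ground h).2 rfl
    exact ⟨a, S, insert_subset (mem_insert_of_mem _ ha) (hSA.trans (subset_insert _ _)),
      (ssubset_iff_of_subset hSA).2 ⟨a, ha, haS⟩, hS⟩
  · -- `a` is a coloop of `M ＼ f`
    push Not at hcirc
    refine ⟨f, {a}, insert_subset_insert (singleton_subset_iff.2 ha),
      (ssubset_iff_of_subset (singleton_subset_iff.2 ha)).2 ⟨a', ha', ha'a⟩,
      Or.inl ⟨⟨singleton_subset_iff.2 (hA.1.1 ha), fun C hC ↦ Or.inr ?_⟩,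
        singleton_nonempty a, a', hA.1.1 ha', ha'a⟩⟩
    obtain ⟨hC, hfC⟩ := deleteElem_isCircuit_iff.1 hC
    exact disjoint_singleton_right.2 (hcirc C hC hfC)

lemma IsMinorSeparator.exists_ssubset [M.Finite] (hM : M.TwoConn)
    (hsep : ∀ g ∈ M.E, ∃ S, M.IsMinorSeparator g S)
    (hA : M.IsMinorSeparator f A) (hA2 : 1 < A.ncard) :
    ∃ g A', insert g A' ⊆ insert f A ∧ A' ⊂ A ∧ M.IsMinorSeparator g A' := by
  have hf := hA.mem_ground hM
  rcases hA with hA | hA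
  · exact exists_isMinorSeparator_ssubset_of_delete hM hf hsep hA hA2
  · rw [← isProperSeparator_dual_iff, dual_contract] at hA
    obtain ⟨g, A', hsub, hA'A, hA'⟩ := exists_isMinorSeparator_ssubset_of_delete
      (twoConn_dual_iff.2 hM) hf
      (fun g hg ↦ (hsep g hg).imp fun _ ↦ isMinorSeparator_dual_iff.2) hA hA2
    exact ⟨g, A', hsub, hA'A, isMinorSeparator_dual_iff.1 hA'⟩

lemma IsMinorSeparator.exists_pair_subset [M.Finite] (hM : M.TwoConn)
    (hsep : ∀ g ∈ M.E, ∃ S, M.IsMinorSeparator g S) (hA : M.IsMinorSeparator f A) :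
    ∃ T ⊆ insert f A, T.ncard = 2 ∧ (M.IsCircuit T ∨ M.IsCocircuit T) := by
  induction hn : A.ncard using Nat.strong_induction_on generalizing f A with
  | _ n ih =>
  have hAfin : A.Finite := M.ground_finite.subset (hA.subset_ground.trans sdiff_subset)
  obtain hA1 | hA2 := le_or_gt A.ncard 1
  · obtain ⟨p, rfl⟩ := ncard_eq_one.1 (hA1.antisymm ((ncard_pos hAfin).2 hA.nonempty))
    have hpf : p ≠ f := (hA.subset_ground rfl).2
    exact ⟨{f, p}, subset_rfl, ncard_pair hpf.symm, hA.isCircuit_or_isCocircuit_pair hM⟩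
  · obtain ⟨g, A', hsub, hA'A, hA'⟩ := hA.exists_ssubset hM hsep hA2
    obtain ⟨T, hT, hT2, hTc⟩ := ih _ (hn ▸ ncard_lt_ncard hA'A hAfin) hA' rfl
    exact ⟨T, hT.trans hsub, hT2, hTc⟩

lemma eq_of_isCircuit_or_isCocircuit_of_ncard_eq_two [M.Finite]
    (hd : {C : Set α | M.IsCircuit' C ∧ C.ncard = 2}.ncard
      + {C : Set α | (M✶).IsCircuit' C ∧ C.ncard = 2}.ncard ≤ 1)
    (hT₁ : T₁.ncard = 2) (hc₁ : M.IsCircuit T₁ ∨ M.IsCocircuit T₁)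
    (hT₂ : T₂.ncard = 2) (hc₂ : M.IsCircuit T₂ ∨ M.IsCocircuit T₂) : T₁ = T₂ := by
  simp only [isCircuit'_iff] at hd
  set 𝒯 := {C | M.IsCircuit C ∧ C.ncard = 2} ∪ {C | M✶.IsCircuit C ∧ C.ncard = 2}
  have hfin : 𝒯.Finite := M.ground_finite.finite_subsets.subset <| by
    rintro C (⟨hC, -⟩ | ⟨hC, -⟩)
    exacts [hC.subset_ground, hC.subset_ground]
  have h𝒯 : 𝒯.ncard ≤ 1 := (ncard_union_le _ _).trans hd
  exact (ncard_le_one hfin).1 h𝒯 T₁ (hc₁.imp (⟨·, hT₁⟩) (⟨·, hT₁⟩))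
    T₂ (hc₂.imp (⟨·, hT₂⟩) (⟨·, hT₂⟩))

end Matroid

/-- **(Oxley)**  Let `M` be a 2-connected matroid with finite ground set of size at
least 2, let `d(2)` be its number of 2-element circuits and `d*(2)` the number of
2-element circuits of its dual.  If `d(2) + d*(2) ≤ 1`, then there is an element `e`
such that both `M ∖ e` and `M / e` are 2-connected. -/
theorem exists_element_delete_contract_two_connected {α : Type*} (M : Matroid α)
    [M.Finite] (hcard : 2 ≤ M.E.ncard) (h2conn : M.TwoConn)
    (hd2 : {C : Set α | M.IsCircuit' C ∧ C.ncard = 2}.ncard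
         + {C : Set α | (M✶).IsCircuit' C ∧ C.ncard = 2}.ncard ≤ 1) :
    ∃ e ∈ M.E, (M.del {e}).TwoConn ∧ (M.con {e}).TwoConn := by
  by_contra! hcon
  simp only [del_eq_delete, con_eq_contract] at hcon
  have hsep : ∀ g ∈ M.E, ∃ A, M.IsMinorSeparator g A := fun g hg ↦ by
    by_cases hdel : (M ＼ {g}).TwoConn
    · exact (not_twoConn_iff.1 (hcon g hg hdel)).imp fun _ ↦ Or.inr
    · exact (not_twoConn_iff.1 hdel).imp fun _ ↦ Or.inl
  obtain ⟨g, hg⟩ : M.E.Nonempty := nonempty_of_ncard_ne_zero (by omega)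
  obtain ⟨A, hA⟩ := hsep g hg
  obtain ⟨T, hTA, hT, hTc⟩ := hA.exists_pair_subset h2conn hsep
  obtain ⟨T', hT'A, hT', hT'c⟩ := hA.compl.exists_pair_subset h2conn hsep
  obtain rfl := eq_of_isCircuit_or_isCocircuit_of_ncard_eq_two hd2 hT hTc hT' hT'c
  -- the unique two-element circuit or cocircuit would lie on both sides of the separation
  obtain ⟨w, hw, hwg⟩ := exists_ne_of_one_lt_ncard (by omega : 1 < T.ncard) g
  exact ((hT'A hw).resolve_left hwg).2 ((hTA hw).resolve_left hwg)
end

section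
/- Let m ≥ 3 be an integer, let C_m be the cycle graph on m vertices, let 0 < q < 1, and set r = (1−q)^{1/m}. If the edge weights v : E(C_m) → ℝ satisfy −q/(1−r) < v_e < −q/(1+r) for every edge e, then (−1)^m Z_{C_m}(q,v) < 0. Moreover, if all edge weights are equal to −q/(1−r), then Z_{C_m}(q,v) = 0. -/
/-!
Every proper subset `A` of the edges of `C_m` spans a forest (delete pendant edges one at a
time), so `k(A) = m - |A|`, while the full edge set is connected. Hence
`Z_{C_m}(q, v) = ∏ (v_e + q) - (1 - q) ∏ v_e`, and since `r^m = 1 - q` this is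
`∏ (v_e + q) - ∏ (r v_e)`. The bounds on `v_e` say exactly `|v_e + q| < -r v_e`, so
`(-1)^m Z = ∏ (-(v_e + q)) - ∏ (-r v_e) < 0`; and `v_e = -q/(1-r)` means `v_e + q = r v_e`,
so the two products cancel.
-/

open Finset

/-- The number of connected components of the spanning subgraph of a finite graph
with edge set `A`. -/
noncomputable def numCompOfEdges {V : Type*} [Fintype V] (A : Finset (Sym2 V)) : ℕ :=
  Nat.card (SimpleGraph.fromEdgeSet (A : Set (Sym2 V))).ConnectedComponent

/-- The multivariate Tutte polynomial `Z_G(q, v) = ∑_{A ⊆ E} q^{k(A)} ∏_{e ∈ A} v_e`. -/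
noncomputable def tutteZ {V : Type*} [Fintype V] [DecidableEq V] (G : SimpleGraph V)
    [DecidableRel G.Adj] (q : ℝ) (v : Sym2 V → ℝ) : ℝ :=
  ∑ A ∈ G.edgeFinset.powerset, q ^ numCompOfEdges A * ∏ e ∈ A, v e

open SimpleGraph

namespace SimpleGraph

variable {V : Type*} {G : SimpleGraph V}

lemma Reachable.of_sup_edge {u v a b : V} (h : (G ⊔ edge u v).Reachable a b) :
    G.Reachable a b ∨ (G.Reachable a u ∧ G.Reachable v b) ∨
      (G.Reachable a v ∧ G.Reachable u b) := by
  obtain ⟨w⟩ := h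
  induction w with
  | nil => exact Or.inl .rfl
  | @cons a c b hadj p ih =>
    rcases hadj with hadj | hadj
    · exact ih.imp (hadj.reachable.trans ·) (Or.imp (.imp_left (hadj.reachable.trans ·))
        (.imp_left (hadj.reachable.trans ·)))
    · obtain ⟨(⟨rfl, rfl⟩ | ⟨rfl, rfl⟩), -⟩ := (edge_adj ..).mp hadj
      · rcases ih with h | ⟨h₁, h₂⟩ | ⟨-, h₂⟩
        exacts [Or.inr (Or.inl ⟨.rfl, h⟩), Or.inl (h₁.symm.trans h₂), Or.inl h₂]
      · rcases ih with h | ⟨-, h₂⟩ | ⟨h₁, h₂⟩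
        exacts [Or.inr (Or.inr ⟨.rfl, h⟩), Or.inl h₂,
          Or.inr (Or.inl ⟨h₁.symm, h₁.symm.trans h₂⟩)]

lemma card_connectedComponent_sup_edge [Finite V] {u v : V} (hne : u ≠ v)
    (hnr : ¬G.Reachable u v) :
    Nat.card (G ⊔ edge u v).ConnectedComponent + 1 = Nat.card G.ConnectedComponent := by
  classical
  let f : {c : G.ConnectedComponent // c ≠ G.connectedComponentMk v} →
      (G ⊔ edge u v).ConnectedComponent := fun c => c.1.map (Hom.ofLE le_sup_left)
  have hf : Function.Bijective f := by
    constructor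
    · rintro ⟨c, hc⟩ ⟨d, hd⟩ h
      induction c using ConnectedComponent.ind
      induction d using ConnectedComponent.ind
      rcases (ConnectedComponent.exact h).of_sup_edge with h' | ⟨-, h'⟩ | ⟨h', -⟩
      · exact Subtype.ext (ConnectedComponent.sound h')
      · exact absurd (ConnectedComponent.sound h'.symm) hd
      · exact absurd (ConnectedComponent.sound h') hc
    · intro c
      induction c using ConnectedComponent.ind with | h a =>
      by_cases hav : G.Reachable a v
      · refine ⟨⟨G.connectedComponentMk u, fun h => hnr (ConnectedComponent.exact h)⟩, ?_⟩
        have huv : (G ⊔ edge u v).Adj u v :=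
          Or.inr ((edge_adj ..).mpr ⟨Or.inl ⟨rfl, rfl⟩, hne⟩)
        exact ConnectedComponent.sound (huv.reachable.trans (hav.symm.mono le_sup_left))
      · exact ⟨⟨G.connectedComponentMk a, fun h => hav (ConnectedComponent.exact h)⟩, rfl⟩
  rw [← Nat.card_eq_of_bijective f hf, ← Finite.card_option,
    Nat.card_congr (Equiv.optionSubtypeNe _)]

lemma not_reachable_of_forall_not_adj {u v : V} (hne : u ≠ v) (hu : ∀ w, ¬G.Adj u w) :
    ¬G.Reachable u v := by
  rintro ⟨_ | ⟨h, _⟩⟩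
  exacts [hne rfl, hu _ h]

lemma card_connectedComponent_bot :
    Nat.card (⊥ : SimpleGraph V).ConnectedComponent = Nat.card V :=
  (Nat.card_eq_of_bijective _ ⟨fun _ _ h => reachable_bot.mp (ConnectedComponent.exact h),
    Quot.mk_surjective⟩).symm

end SimpleGraph

lemma numCompOfEdges_empty {V : Type*} [Fintype V] :
    numCompOfEdges (∅ : Finset (Sym2 V)) = Fintype.card V := by
  rw [numCompOfEdges, coe_empty, fromEdgeSet_empty, card_connectedComponent_bot,
    Nat.card_eq_fintype_card]

lemma numCompOfEdges_insert_add_one {V : Type*} [Fintype V] [DecidableEq V]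
    {B : Finset (Sym2 V)} {u w : V} (huw : u ≠ w) (hu : ∀ e ∈ B, u ∉ e) :
    numCompOfEdges (insert s(u, w) B) + 1 = numCompOfEdges B := by
  have hG : fromEdgeSet ↑(insert s(u, w) B) = fromEdgeSet ↑B ⊔ edge u w := by
    rw [coe_insert, Set.insert_eq, fromEdgeSet_union, sup_comm]
    rfl
  rw [numCompOfEdges, numCompOfEdges, hG]
  exact card_connectedComponent_sup_edge huw <| not_reachable_of_forall_not_adj huw
    fun c hc => hu _ ((fromEdgeSet_adj _).mp hc).1 (Sym2.mem_mk_left _ _)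

open Fin.NatCast in
lemma Fin.exists_and_not_sub_one {m : ℕ} [NeZero m] {P : Fin m → Prop} (hP : ∃ i, P i)
    (hnP : ∃ j, ¬P j) : ∃ u, P u ∧ ¬P (u - 1) := by
  obtain ⟨i, hi⟩ := hP
  obtain ⟨j, hj⟩ := hnP
  by_contra! h
  have hk : ∀ k : ℕ, P (i - k) := by
    intro k
    induction k with
    | zero => simpa using hi
    | succ k ih => simpa [sub_add_eq_sub_sub] using h _ ih
  exact hj (by simpa [Fin.cast_val_eq_self] using hk (i - j).val)

namespace SimpleGraph

variable {n : ℕ}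

lemma exists_eq_mk_of_mem_edgeSet_cycleGraph {e : Sym2 (Fin (n + 3))}
    (he : e ∈ (cycleGraph (n + 3)).edgeSet) : ∃ j, e = s(j, j + 1) := by
  induction e with
  | h x y =>
    rcases (cycleGraph_adj (u := x) (v := y)).mp he with h | h
    · exact ⟨y, by rw [← h, add_sub_cancel, Sym2.eq_swap]⟩
    · exact ⟨x, by rw [← h, add_sub_cancel]⟩

lemma eq_or_eq_of_mem_edgeSet_cycleGraph {u : Fin (n + 3)} {e : Sym2 (Fin (n + 3))}
    (he : e ∈ (cycleGraph (n + 3)).edgeSet) (hu : u ∈ e) :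
    e = s(u, u - 1) ∨ e = s(u, u + 1) := by
  obtain ⟨w, rfl⟩ := Sym2.mem_iff_exists.mp hu
  have : w ∈ (cycleGraph (n + 3)).neighborSet u := he
  rw [cycleGraph_neighborSet] at this
  rcases this with rfl | rfl
  exacts [Or.inl rfl, Or.inr rfl]

lemma card_edgeFinset_cycleGraph : #(cycleGraph (n + 3)).edgeFinset = n + 3 := by
  have h := sum_degrees_eq_twice_card_edges (cycleGraph (n + 3))
  simp only [cycleGraph_degree_three_le, sum_const, card_univ, Fintype.card_fin,
    smul_eq_mul] at h
  omega

lemma exists_pendant_of_ssubset_edgeFinset_cycleGraph {A : Finset (Sym2 (Fin (n + 3)))}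
    (hA : A ⊂ (cycleGraph (n + 3)).edgeFinset) (hA₀ : A.Nonempty) :
    ∃ u, s(u, u + 1) ∈ A ∧ s(u, u - 1) ∉ A := by
  obtain ⟨f, hfE, hfA⟩ := exists_of_ssubset hA
  obtain ⟨j, rfl⟩ := exists_eq_mk_of_mem_edgeSet_cycleGraph (mem_edgeFinset.mp hfE)
  obtain ⟨e, he⟩ := hA₀
  obtain ⟨i, rfl⟩ := exists_eq_mk_of_mem_edgeSet_cycleGraph (mem_edgeFinset.mp (hA.subset he))
  obtain ⟨u, hu, hu'⟩ :=
    Fin.exists_and_not_sub_one (P := fun j => s(j, j + 1) ∈ A) ⟨i, he⟩ ⟨j, hfA⟩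
  refine ⟨u, hu, ?_⟩
  rwa [sub_add_cancel, Sym2.eq_swap] at hu'

lemma numCompOfEdges_add_card_of_ssubset_cycleGraph {A : Finset (Sym2 (Fin (n + 3)))}
    (hA : A ⊂ (cycleGraph (n + 3)).edgeFinset) : numCompOfEdges A + #A = n + 3 := by
  induction A using Finset.strongInduction with | H A ih =>
  rcases A.eq_empty_or_nonempty with rfl | hA₀
  · simp [numCompOfEdges_empty]
  obtain ⟨u, hu, hu'⟩ := exists_pendant_of_ssubset_edgeFinset_cycleGraph hA hA₀
  have hBA : A.erase s(u, u + 1) ⊂ A := erase_ssubset hu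
  have hiso : ∀ e ∈ A.erase s(u, u + 1), u ∉ e := by
    intro e he hue
    have heE := mem_edgeFinset.mp (hA.subset (mem_of_mem_erase he))
    rcases eq_or_eq_of_mem_edgeSet_cycleGraph heE hue with rfl | rfl
    exacts [hu' (mem_of_mem_erase he), ne_of_mem_erase he rfl]
  have hsplit := numCompOfEdges_insert_add_one (w := u + 1) (by simp) hiso
  rw [insert_erase hu] at hsplit
  have := ih _ hBA (hBA.trans hA)
  have := card_erase_add_one hu
  omega

lemma numCompOfEdges_edgeFinset_cycleGraph :
    numCompOfEdges (cycleGraph (n + 3)).edgeFinset = 1 := by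
  have := (cycleGraph_preconnected (n := n + 3)).subsingleton_connectedComponent
  rw [numCompOfEdges, coe_edgeFinset, fromEdgeSet_edgeSet]
  exact Nat.card_of_subsingleton (connectedComponentMk _ 0)

lemma tutteZ_cycleGraph (q : ℝ) (v : Sym2 (Fin (n + 3)) → ℝ) :
    tutteZ (cycleGraph (n + 3)) q v =
      ∏ e ∈ (cycleGraph (n + 3)).edgeFinset, (v e + q) -
        (1 - q) * ∏ e ∈ (cycleGraph (n + 3)).edgeFinset, v e := by
  set E := (cycleGraph (n + 3)).edgeFinset
  have hproper : ∀ A ∈ E.powerset, A ≠ E →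
      q ^ numCompOfEdges A * ∏ e ∈ A, v e - (∏ e ∈ A, v e) * ∏ _e ∈ E \ A, q = 0 := by
    intro A hA hne
    have hAE : A ⊂ E := ssubset_of_subset_of_ne (mem_powerset.mp hA) hne
    have := numCompOfEdges_add_card_of_ssubset_cycleGraph hAE
    rw [prod_const, card_sdiff_of_subset hAE.subset, card_edgeFinset_cycleGraph,
      show numCompOfEdges A = n + 3 - #A by omega]
    ring
  have hdiff :
      tutteZ (cycleGraph (n + 3)) q v - ∏ e ∈ E, (v e + q) = (q - 1) * ∏ e ∈ E, v e := by
    rw [tutteZ, prod_add, ← sum_sub_distrib, sum_eq_single E hproper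
      (fun h => absurd (mem_powerset_self E) h), numCompOfEdges_edgeFinset_cycleGraph,
      sdiff_self, bot_eq_empty, prod_empty]
    ring
  linarith

lemma tutteZ_cycleGraph_of_pow_eq {q r : ℝ} (hr : r ^ (n + 3) = 1 - q)
    (v : Sym2 (Fin (n + 3)) → ℝ) :
    tutteZ (cycleGraph (n + 3)) q v =
      ∏ e ∈ (cycleGraph (n + 3)).edgeFinset, (v e + q) -
        ∏ e ∈ (cycleGraph (n + 3)).edgeFinset, r * v e := by
  rw [tutteZ_cycleGraph, prod_mul_distrib, prod_const, card_edgeFinset_cycleGraph, hr]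

end SimpleGraph

lemma Finset.abs_prod_lt_prod_of_nonempty {ι R : Type*} [CommRing R] [LinearOrder R]
    [IsStrictOrderedRing R] {s : Finset ι} {f g : ι → R} (hs : s.Nonempty)
    (h : ∀ i ∈ s, |f i| < g i) : |∏ i ∈ s, f i| < ∏ i ∈ s, g i := by
  rw [abs_prod]
  induction hs using Finset.Nonempty.cons_induction with
  | singleton a => simpa using h a (mem_singleton_self a)
  | cons a s ha hs ih =>
    rw [prod_cons, prod_cons]
    exact mul_lt_mul'' (h a (mem_cons_self a s)) (ih fun i hi => h i (mem_cons_of_mem hi))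
      (abs_nonneg _) (prod_nonneg fun _ _ => abs_nonneg _)

lemma abs_add_lt_neg_mul_iff {K : Type*} [Field K] [LinearOrder K] [IsStrictOrderedRing K]
    {r q x : K} (hr : |r| < 1) :
    |x + q| < -(r * x) ↔ -q / (1 - r) < x ∧ x < -q / (1 + r) := by
  obtain ⟨hr₁, hr₂⟩ := abs_lt.mp hr
  rw [abs_lt, div_lt_iff₀ (by linarith), lt_div_iff₀ (by linarith)]
  constructor <;> rintro ⟨h₁, h₂⟩ <;> constructor <;> linarith

/-- Let `m ≥ 3`, let `C_m` be the cycle on `m` vertices, let `0 < q < 1` and set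
`r = (1-q)^{1/m}`.  If `-q/(1-r) < v_e < -q/(1+r)` for every edge then
`(-1)^m Z_{C_m}(q,v) < 0`; and if `v_e = -q/(1-r)` for every edge then
`Z_{C_m}(q,v) = 0`. -/
theorem tutteZ_cycle_sign {m : ℕ} (hm : 3 ≤ m) (q : ℝ) (hq0 : 0 < q) (hq1 : q < 1)
    (r : ℝ) (hr : r = (1 - q) ^ ((m : ℝ)⁻¹)) :
    (∀ v : Sym2 (Fin m) → ℝ,
      (∀ e ∈ (SimpleGraph.cycleGraph m).edgeFinset,
        -q / (1 - r) < v e ∧ v e < -q / (1 + r)) →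
      (-1 : ℝ) ^ m * tutteZ (SimpleGraph.cycleGraph m) q v < 0) ∧
    (∀ v : Sym2 (Fin m) → ℝ,
      (∀ e ∈ (SimpleGraph.cycleGraph m).edgeFinset, v e = -q / (1 - r)) →
      tutteZ (SimpleGraph.cycleGraph m) q v = 0) := by
  obtain ⟨n, rfl⟩ : ∃ n, m = n + 3 := ⟨m - 3, by omega⟩
  have hr₀ : 0 ≤ r := hr ▸ Real.rpow_nonneg (by linarith) _
  have hr₁ : r < 1 := hr ▸ Real.rpow_lt_one (by linarith) (by linarith) (by positivity)
  have hrpow : r ^ (n + 3) = 1 - q := hr ▸ Real.rpow_inv_natCast_pow (by linarith) (by omega)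
  set E := (cycleGraph (n + 3)).edgeFinset
  refine ⟨fun v hv => ?_, fun v hv => ?_⟩
  · have hneg : ∀ f : Sym2 (Fin (n + 3)) → ℝ,
        (-1) ^ (n + 3) * ∏ e ∈ E, f e = ∏ e ∈ E, -f e :=
      fun f => by rw [prod_neg, card_edgeFinset_cycleGraph]
    have hEne : E.Nonempty := card_pos.mp (by rw [card_edgeFinset_cycleGraph]; omega)
    rw [tutteZ_cycleGraph_of_pow_eq hrpow, mul_sub, hneg, hneg, sub_neg]
    refine (le_abs_self _).trans_lt (abs_prod_lt_prod_of_nonempty hEne fun e he => ?_)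
    rw [abs_neg]
    exact (abs_add_lt_neg_mul_iff (abs_lt.mpr ⟨by linarith, hr₁⟩)).mpr (hv e he)
  · rw [tutteZ_cycleGraph_of_pow_eq hrpow, sub_eq_zero]
    refine prod_congr rfl fun e he => ?_
    have : 1 - r ≠ 0 := (sub_pos.mpr hr₁).ne'
    rw [hv e he]
    field_simp
    ring
end

section
/- Fix a real number q with 0 < q < 1, and for real m ≥ 2 define the open interval I_m = ( −(1 + (1−q)^{1/m}), −q/(1 + (1−q)^{1/m}) ). Then: (a) I_m is self-dual, i.e. if v ∈ I_m then q/v ∈ I_m; (b) if 2 ≤ m < m′ then I_m is strictly contained in I_{m′}; (c) if v₁, v₂ ∈ I_4 then v₁ ∥ v₂ ∈ I_2; (d) if v₁, v₂ ∈ I_4 then v₁ ⋈_q v₂ ∈ I_2. -/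
/-- Parallel connection of edge weights: `v₁ ∥ v₂ = (1+v₁)(1+v₂) - 1`. -/
def parallelConn (v₁ v₂ : ℝ) : ℝ := (1 + v₁) * (1 + v₂) - 1

/-- Series connection of edge weights: `v₁ ⋈_q v₂ = v₁v₂ / (q + v₁ + v₂)`. -/
noncomputable def seriesConn (q v₁ v₂ : ℝ) : ℝ := v₁ * v₂ / (q + v₁ + v₂)

/-!
The map `v ↦ q / v` swaps the endpoints `-a` and `-q / a` of `(-a, -q/a)`, so all these intervals
are self-dual, and it turns parallel connection into series connection:
`v₁ ⋈_q v₂ = q / (q/v₁ ∥ q/v₂)`. Hence (d) follows from (a) and (c). For (c), write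
`t = (1-q)^{1/4}`: then `I_4 ⊆ {v | |1 + v| < t}`, `I_2 = {v | |1 + v| < t²}`, and
`1 + v₁ ∥ v₂ = (1 + v₁)(1 + v₂)`.
-/

open Set

/-- `I_m` is `dualIoo q (1 + (1-q)^{1/m})`. -/
def dualIoo (q a : ℝ) : Set ℝ := Ioo (-a) (-q / a)

section DualIoo

variable {q a a' b t v v₁ v₂ : ℝ}

theorem neg_of_mem_dualIoo (hq : 0 < q) (ha : 0 < a) (hv : v ∈ dualIoo q a) : v < 0 :=
  hv.2.trans (div_neg_of_neg_of_pos (neg_neg_of_pos hq) ha)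

theorem div_mem_dualIoo (hq : 0 < q) (ha : 0 < a) (hv : v ∈ dualIoo q a) :
    q / v ∈ dualIoo q a := by
  have hv0 := neg_of_mem_dualIoo hq ha hv
  obtain ⟨hlo, hhi⟩ := hv
  rw [lt_div_iff₀ ha] at hhi
  constructor
  · rw [lt_div_iff_of_neg hv0]
    linarith
  · rw [div_lt_iff_of_neg hv0, neg_div, neg_mul, div_mul_eq_mul_div, neg_lt, lt_div_iff₀ ha]
    nlinarith

theorem dualIoo_ssubset (hq : 0 < q) (ha : 0 < a) (haa' : a < a') (hqa : q < a * a') :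
    dualIoo q a ⊂ dualIoo q a' := by
  have hsub : dualIoo q a ⊆ dualIoo q a' := by
    refine Ioo_subset_Ioo (by linarith) ?_
    rw [neg_div, neg_div, neg_le_neg_iff]
    exact div_le_div_of_nonneg_left hq.le ha haa'.le
  refine (ssubset_iff_of_subset hsub).2 ⟨-a, ⟨by linarith, ?_⟩, fun h => lt_irrefl _ h.1⟩
  rw [neg_div, neg_lt_neg_iff, div_lt_iff₀ (ha.trans haa')]
  exact hqa

theorem dualIoo_subset_abs_lt (ht : 0 < t) (hq : 1 - t ^ 2 ≤ q) :
    dualIoo q (1 + t) ⊆ {v | |1 + v| < t} := by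
  rintro v ⟨hlo, hhi⟩
  rw [lt_div_iff₀ (by linarith)] at hhi
  show |1 + v| < t
  rw [abs_lt]
  constructor <;> nlinarith

theorem abs_lt_subset_dualIoo (ht : 0 < t) (hq : q ≤ 1 - t ^ 2) :
    {v | |1 + v| < t} ⊆ dualIoo q (1 + t) := by
  intro v (hv : |1 + v| < t)
  rw [abs_lt] at hv
  refine ⟨by linarith, ?_⟩
  rw [lt_div_iff₀ (by linarith)]
  nlinarith

theorem parallelConn_mem_dualIoo (ht : 0 < t) (ht1 : t ≤ 1) (hq : t ^ 4 = 1 - q)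
    (hv₁ : v₁ ∈ dualIoo q (1 + t)) (hv₂ : v₂ ∈ dualIoo q (1 + t)) :
    parallelConn v₁ v₂ ∈ dualIoo q (1 + t ^ 2) := by
  have hsub : dualIoo q (1 + t) ⊆ {v | |1 + v| < t} :=
    dualIoo_subset_abs_lt ht (by nlinarith [pow_le_pow_of_le_one ht.le ht1 (by norm_num : 2 ≤ 4)])
  refine abs_lt_subset_dualIoo (by positivity) (by nlinarith) ?_
  have h₁ : |1 + v₁| < t := hsub hv₁
  have h₂ : |1 + v₂| < t := hsub hv₂
  calc |1 + parallelConn v₁ v₂| = |1 + v₁| * |1 + v₂| := by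
        rw [parallelConn, add_sub_cancel, abs_mul]
    _ < t ^ 2 := by rw [sq]; exact mul_lt_mul'' h₁ h₂ (abs_nonneg _) (abs_nonneg _)

theorem seriesConn_eq_div_parallelConn (hq : q ≠ 0) (hv₁ : v₁ ≠ 0) (hv₂ : v₂ ≠ 0) :
    seriesConn q v₁ v₂ = q / parallelConn (q / v₁) (q / v₂) := by
  have hpar : parallelConn (q / v₁) (q / v₂) = q * (q + v₁ + v₂) / (v₁ * v₂) := by
    rw [parallelConn]
    field_simp
    ring
  rw [hpar, seriesConn, div_div_eq_mul_div, mul_div_mul_left _ _ hq]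

theorem seriesConn_mem_dualIoo (hq : 0 < q) (ha : 0 < a) (hb : 0 < b)
    (hpar : ∀ v₁ ∈ dualIoo q a, ∀ v₂ ∈ dualIoo q a, parallelConn v₁ v₂ ∈ dualIoo q b)
    (hv₁ : v₁ ∈ dualIoo q a) (hv₂ : v₂ ∈ dualIoo q a) : seriesConn q v₁ v₂ ∈ dualIoo q b := by
  rw [seriesConn_eq_div_parallelConn hq.ne' (neg_of_mem_dualIoo hq ha hv₁).ne
    (neg_of_mem_dualIoo hq ha hv₂).ne]
  exact div_mem_dualIoo hq hb (hpar _ (div_mem_dualIoo hq ha hv₁) _ (div_mem_dualIoo hq ha hv₂))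

end DualIoo

/-- For `0 < q < 1` and real `m ≥ 2`, the intervals
`I_m = ( -(1 + (1-q)^{1/m}), -q/(1 + (1-q)^{1/m}) )` satisfy:
(a) each `I_m` is self-dual under `v ↦ q/v`;
(b) `I_m ⊊ I_{m'}` for `2 ≤ m < m'`;
(c) `I_4 ∥ I_4 ⊆ I_2`; (d) `I_4 ⋈_q I_4 ⊆ I_2`. -/
theorem interval_Im_properties (q : ℝ) (hq0 : 0 < q) (hq1 : q < 1)
    (I : ℝ → Set ℝ)
    (hI : ∀ m : ℝ, I m =
      Set.Ioo (-(1 + (1 - q) ^ m⁻¹)) (-q / (1 + (1 - q) ^ m⁻¹))) :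
    (∀ m : ℝ, 2 ≤ m → ∀ v ∈ I m, q / v ∈ I m) ∧
    (∀ m m' : ℝ, 2 ≤ m → m < m' → I m ⊂ I m') ∧
    (∀ v₁ ∈ I 4, ∀ v₂ ∈ I 4, parallelConn v₁ v₂ ∈ I 2) ∧
    (∀ v₁ ∈ I 4, ∀ v₂ ∈ I 4, seriesConn q v₁ v₂ ∈ I 2) := by
  have hI' : ∀ m, I m = dualIoo q (1 + (1 - q) ^ m⁻¹) := hI
  have hbase : 0 < 1 - q := by linarith
  have hroot : ∀ m : ℝ, 0 < (1 - q) ^ m⁻¹ := fun m => Real.rpow_pos_of_pos hbase _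
  have hpos : ∀ m : ℝ, 0 < 1 + (1 - q) ^ m⁻¹ := fun m => by linarith [hroot m]
  set t := (1 - q) ^ (4 : ℝ)⁻¹ with ht
  have ht2 : (1 - q) ^ (2 : ℝ)⁻¹ = t ^ 2 := by
    rw [ht, ← Real.rpow_mul_natCast hbase.le]
    norm_num
  have ht4 : t ^ 4 = 1 - q := by exact_mod_cast Real.rpow_inv_natCast_pow hbase.le four_ne_zero
  have hpar : ∀ v₁ ∈ I 4, ∀ v₂ ∈ I 4, parallelConn v₁ v₂ ∈ I 2 := by
    simp only [hI', ht2]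
    exact fun v₁ h₁ v₂ h₂ => parallelConn_mem_dualIoo (hroot 4)
      (Real.rpow_le_one hbase.le (by linarith) (by norm_num)) ht4 h₁ h₂
  refine ⟨fun m _ v hv => ?_, fun m m' hm hmm' => ?_, hpar, ?_⟩
  · rw [hI'] at hv ⊢
    exact div_mem_dualIoo hq0 (hpos m) hv
  · have hlt : (1 - q) ^ m⁻¹ < (1 - q) ^ m'⁻¹ :=
      Real.rpow_lt_rpow_of_exponent_gt hbase (by linarith) (inv_strictAnti₀ (by linarith) hmm')
    rw [hI', hI']
    exact dualIoo_ssubset hq0 (hpos m) (by linarith)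
      (by nlinarith [hroot m, hroot m'])
  · simp only [hI'] at hpar ⊢
    exact fun v₁ h₁ v₂ h₂ => seriesConn_mem_dualIoo hq0 (hpos 4) (hpos 2) hpar h₁ h₂
end

section
/- For every real q with 0 < q < 1, the cubic polynomial v³ + 3qv² + (q² + 2q)v + q² has exactly one real root, and this root lies strictly between −q and −q/2. -/
/-- For `0 < q < 1`, the cubic `v³ + 3qv² + (q² + 2q)v + q²` has exactly one real root,
and this root lies strictly between `-q` and `-q/2`. -/
theorem cubic_unique_root_between (q : ℝ) (hq0 : 0 < q) (hq1 : q < 1) :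
    ∃ v : ℝ, (v ^ 3 + 3 * q * v ^ 2 + (q ^ 2 + 2 * q) * v + q ^ 2 = 0 ∧
        -q < v ∧ v < -q / 2) ∧
      ∀ w : ℝ, w ^ 3 + 3 * q * w ^ 2 + (q ^ 2 + 2 * q) * w + q ^ 2 = 0 → w = v := by
  set f : ℝ → ℝ := fun v => v ^ 3 + 3 * q * v ^ 2 + (q ^ 2 + 2 * q) * v + q ^ 2 with hf
  have hmono : StrictMono f := by
    intro a b hab
    have key : 0 < a ^ 2 + a * b + b ^ 2 + 3 * q * (a + b) + q ^ 2 + 2 * q := by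
      nlinarith [sq_nonneg (a - b), sq_nonneg (a + b + 2 * q),
        mul_pos hq0 (by linarith : (0:ℝ) < 1 - q)]
    have := mul_pos (sub_pos.2 hab) key
    simp only [hf]
    nlinarith [this]
  have hcont : Continuous f := by
    simp only [hf]; continuity
  have hab : (-q : ℝ) ≤ -q / 2 := by linarith
  have hfa : f (-q) < 0 := by
    simp only [hf]
    nlinarith [mul_pos (mul_pos hq0 hq0) (show (0:ℝ) < 1 - q by linarith)]
  have hfb : 0 < f (-q / 2) := by
    simp only [hf]
    nlinarith [mul_pos (mul_pos hq0 hq0) hq0]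
  have h0 : (0 : ℝ) ∈ Set.Ioo (f (-q)) (f (-q / 2)) := ⟨hfa, hfb⟩
  obtain ⟨v, hv, hv0⟩ := intermediate_value_Ioo hab hcont.continuousOn h0
  refine ⟨v, ⟨hv0, hv.1, hv.2⟩, fun w hw => hmono.injective ?_⟩
  show f w = f v
  rw [hv0]; exact hw
end

section
/- For every real q with 0 < q ≤ 32/27, there exists a unique real number v with −3q/4 ≤ v < −q/2 satisfying v³ − 2qv − q² = 0. Moreover, if in addition 0 < q < 1, then this root v satisfies v > −q/(1 + (1−q)^{1/4}). -/
/-!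
On `[-3q/4, 3q/4]` the cubic `v³ - 2qv - q²` is strictly decreasing as soon as
`3 (3q/4)² ≤ 2q`, i.e. `q ≤ 32/27`: the difference quotient is `v² + vw + w² - 2q`.
It is nonnegative at `-3q/4` and equals `-q³/8 < 0` at `-q/2`, which gives the unique root.
For the lower bound, put `r = (1 - q)^{1/4}`, so `q = 1 - r⁴`; at `-q/(1 + r)` the cubic equals
`q² r (1 - r)² / (1 + r)² > 0`, so by monotonicity the root lies to the right of that point.
-/

open Set

def diamondCubic (q v : ℝ) : ℝ := v ^ 3 - 2 * q * v - q ^ 2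

lemma diamondCubic_sub_diamondCubic (q v w : ℝ) :
    diamondCubic q v - diamondCubic q w = (v - w) * (v ^ 2 + v * w + w ^ 2 - 2 * q) := by
  unfold diamondCubic; ring

lemma strictAntiOn_diamondCubic {q a : ℝ} (ha : 3 * a ^ 2 ≤ 2 * q) :
    StrictAntiOn (diamondCubic q) (Icc (-a) a) := by
  intro v ⟨hv₁, hv₂⟩ w ⟨hw₁, hw₂⟩ hvw
  have hsum : v ^ 2 + v * w + w ^ 2 < 3 * a ^ 2 := by
    nlinarith [mul_nonneg (sub_nonneg.2 hv₂) (sub_nonneg.2 hw₂),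
      mul_nonneg (neg_le_iff_add_nonneg.1 hv₁) (neg_le_iff_add_nonneg.1 hw₁),
      mul_pos (sub_pos.2 hvw) (sub_pos.2 hvw)]
  have hdiff := diamondCubic_sub_diamondCubic q v w
  nlinarith

lemma exists_diamondCubic_eq_zero {q : ℝ} (hq0 : 0 < q) (hq : q ≤ 32 / 27) :
    ∃ v ∈ Ico (-3 * q / 4) (-q / 2), diamondCubic q v = 0 := by
  have hcont : ContinuousOn (diamondCubic q) (Icc (-3 * q / 4) (-q / 2)) := by
    unfold diamondCubic; fun_prop
  have hleft : 0 ≤ diamondCubic q (-3 * q / 4) := by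
    unfold diamondCubic; nlinarith [sq_nonneg q]
  have hright : diamondCubic q (-q / 2) < 0 := by
    unfold diamondCubic; nlinarith [pow_pos hq0 3]
  obtain ⟨v, hv, hv0⟩ :=
    intermediate_value_Icc' (by linarith) hcont ⟨hright.le, hleft⟩
  exact ⟨v, ⟨hv.1, hv.2.lt_of_ne (by rintro rfl; linarith)⟩, hv0⟩

lemma diamondCubic_neg_div_one_add_pos {r : ℝ} (hr0 : 0 < r) (hr1 : r < 1) :
    0 < diamondCubic (1 - r ^ 4) (-(1 - r ^ 4) / (1 + r)) := by
  have key : diamondCubic (1 - r ^ 4) (-(1 - r ^ 4) / (1 + r)) =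
      (1 - r ^ 4) ^ 2 * r * (1 - r) ^ 2 / (1 + r) ^ 2 := by
    unfold diamondCubic
    field_simp
    ring
  rw [key]
  have : 0 < 1 - r ^ 4 := by nlinarith [pow_lt_one₀ hr0.le hr1 (n := 4) (by norm_num)]
  positivity

lemma diamondCubic_neg_div_one_add_rpow_pos {q : ℝ} (hq0 : 0 < q) (hq1 : q < 1) :
    0 < diamondCubic q (-q / (1 + (1 - q) ^ ((4 : ℝ)⁻¹))) := by
  set r := (1 - q) ^ ((4 : ℝ)⁻¹)
  have hr4 : r ^ 4 = 1 - q := by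
    simpa using Real.rpow_inv_natCast_pow (x := 1 - q) (n := 4) (by linarith) (by norm_num)
  have hq_eq : q = 1 - r ^ 4 := by linarith
  rw [hq_eq]
  exact diamondCubic_neg_div_one_add_pos (Real.rpow_pos_of_pos (by linarith) _)
    (Real.rpow_lt_one (by linarith) (by linarith) (by norm_num))

/-- For `0 < q ≤ 32/27` there is a unique real `v` with `-3q/4 ≤ v < -q/2` satisfying
`v³ - 2qv - q² = 0`; moreover if `q < 1` then this root satisfies
`v > -q/(1 + (1-q)^{1/4})`. -/
theorem diamond_fixed_point_exists_unique (q : ℝ) (hq0 : 0 < q) (hq : q ≤ 32 / 27) :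
    (∃! v : ℝ, -3 * q / 4 ≤ v ∧ v < -q / 2 ∧ v ^ 3 - 2 * q * v - q ^ 2 = 0) ∧
    (q < 1 → ∀ v : ℝ, -3 * q / 4 ≤ v → v < -q / 2 → v ^ 3 - 2 * q * v - q ^ 2 = 0 →
      -q / (1 + (1 - q) ^ ((4 : ℝ)⁻¹)) < v) := by
  have hanti : StrictAntiOn (diamondCubic q) (Icc (-(3 * q / 4)) (3 * q / 4)) :=
    strictAntiOn_diamondCubic (by nlinarith)
  refine ⟨?_, fun hq1 v hv₁ hv₂ hv => ?_⟩
  · obtain ⟨v, ⟨hv₁, hv₂⟩, hv⟩ := exists_diamondCubic_eq_zero hq0 hq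
    refine ⟨v, ⟨hv₁, hv₂, hv⟩, fun w ⟨hw₁, hw₂, hw⟩ => ?_⟩
    exact hanti.injOn ⟨by linarith, by linarith⟩ ⟨by linarith, by linarith⟩ (hw.trans hv.symm)
  have hpos := diamondCubic_neg_div_one_add_rpow_pos hq0 hq1
  set w := -q / (1 + (1 - q) ^ ((4 : ℝ)⁻¹))
  have hw₀ : w ≤ 0 := div_nonpos_of_nonpos_of_nonneg (by linarith) (by positivity)
  by_contra! hvw
  have hwv := (hanti.lt_iff_gt ⟨by linarith, by linarith⟩ ⟨by linarith, by linarith⟩).1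
    (hv.trans_lt hpos)
  linarith
end

section
/- Let 0 < q ≤ 32/27, let v₊ be a real root of v³ − 2qv − q² = 0 with −3q/4 ≤ v₊ < −q/2, and set v₋ = q/v₊. Then: (a) v₊ ⋈_q v₊ = v₋; (b) v₋ ∥ v₋ = v₊; (c) the interval [v₋, v₊] is self-dual, i.e. if v ∈ [v₋, v₊] then q/v ∈ [v₋, v₊]; (d) if v, w ∈ [v₋, v₊] then v ∥ w ∈ [v₋, v₊]; (e) if v, w ∈ [v₋, v₊] then v ⋈_q w ∈ [v₋, v₊]. -/
open Set

theorem mul_mem_Icc_sq {a x y : ℝ} (ha₁ : -1 ≤ a) (ha₀ : a ≤ 0) (hx : x ∈ Icc a (a ^ 2))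
    (hy : y ∈ Icc a (a ^ 2)) : x * y ∈ Icc a (a ^ 2) := by
  have hsq : a ^ 2 ≤ -a := by nlinarith
  have habs : ∀ z ∈ Icc a (a ^ 2), |z| ≤ -a := fun z hz => abs_le.2 ⟨by linarith [hz.1], by linarith [hz.2]⟩
  have hxy : |x * y| ≤ a ^ 2 := by
    calc |x * y| = |x| * |y| := abs_mul x y
      _ ≤ -a * -a := mul_le_mul (habs x hx) (habs y hy) (abs_nonneg y) (by linarith)
      _ = a ^ 2 := by ring
  obtain ⟨hlo, hhi⟩ := abs_le.1 hxy
  exact ⟨by linarith, hhi⟩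

theorem parallelConn_mem_Icc {vm vp v w : ℝ} (hvm : vm ≤ -1) (hvp : vp ≤ 0)
    (hpar : parallelConn vm vm = vp) (hv : v ∈ Icc vm vp) (hw : w ∈ Icc vm vp) :
    parallelConn v w ∈ Icc vm vp := by
  have hsq : 1 + vp = (1 + vm) ^ 2 := by rw [← hpar, parallelConn]; ring
  have hshift : ∀ z ∈ Icc vm vp, 1 + z ∈ Icc (1 + vm) ((1 + vm) ^ 2) := fun z hz =>
    hsq ▸ ⟨by linarith [hz.1], by linarith [hz.2]⟩
  obtain ⟨hlo, hhi⟩ := mul_mem_Icc_sq (by nlinarith) (by linarith) (hshift v hv) (hshift w hw)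
  exact ⟨by rw [parallelConn]; linarith, by rw [parallelConn]; linarith⟩

theorem div_mem_Icc_of_mul_eq {q vm vp v : ℝ} (hmul : vm * vp = q) (hvp : vp < 0)
    (hv : v ∈ Icc vm vp) : q / v ∈ Icc vm vp := by
  obtain ⟨hlo, hhi⟩ := hv
  have hv0 : v < 0 := hhi.trans_lt hvp
  constructor
  · rw [le_div_iff_of_neg hv0, ← hmul]
    exact mul_le_mul_of_nonpos_left hhi (by linarith)
  · rw [div_le_iff_of_neg hv0, ← hmul, mul_comm vm]
    exact mul_le_mul_of_nonpos_left hlo hvp.le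

theorem seriesConn_eq_div_parallelConn_s17 {q v w : ℝ} (hq : q ≠ 0) (hv : v ≠ 0) (hw : w ≠ 0) :
    seriesConn q v w = q / parallelConn (q / v) (q / w) := by
  have hdual : parallelConn (q / v) (q / w) = q * (q + v + w) / (v * w) := by
    rw [parallelConn]; field_simp; ring
  rw [seriesConn, hdual, div_div_eq_mul_div, mul_div_mul_left _ _ hq]

theorem seriesConn_mem_Icc {q vm vp v w : ℝ} (hq : q ≠ 0) (hmul : vm * vp = q) (hvm : vm ≤ -1)
    (hvp : vp < 0) (hpar : parallelConn vm vm = vp) (hv : v ∈ Icc vm vp)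
    (hw : w ∈ Icc vm vp) : seriesConn q v w ∈ Icc vm vp := by
  rw [seriesConn_eq_div_parallelConn_s17 hq (hv.2.trans_lt hvp).ne (hw.2.trans_lt hvp).ne]
  exact div_mem_Icc_of_mul_eq hmul hvp <| parallelConn_mem_Icc hvm hvp.le hpar
    (div_mem_Icc_of_mul_eq hmul hvp hv) (div_mem_Icc_of_mul_eq hmul hvp hw)

theorem parallelConn_div_self_of_root {q vp : ℝ} (hvp : vp ≠ 0)
    (hroot : vp ^ 3 - 2 * q * vp - q ^ 2 = 0) : parallelConn (q / vp) (q / vp) = vp := by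
  rw [parallelConn]
  field_simp
  linear_combination -hroot

theorem diamond_interval_properties_general (q vp : ℝ) (hq0 : 0 < q)
    (hroot : vp ^ 3 - 2 * q * vp - q ^ 2 = 0) (hlb : -3 * q / 4 ≤ vp)
    (hub : vp < -q / 2) (vm : ℝ) (hv : vm = q / vp) :
    seriesConn q vp vp = vm ∧
    parallelConn vm vm = vp ∧
    (∀ v ∈ Set.Icc vm vp, q / v ∈ Set.Icc vm vp) ∧
    (∀ v ∈ Set.Icc vm vp, ∀ w ∈ Set.Icc vm vp, parallelConn v w ∈ Set.Icc vm vp) ∧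
    (∀ v ∈ Set.Icc vm vp, ∀ w ∈ Set.Icc vm vp, seriesConn q v w ∈ Set.Icc vm vp) := by
  have hvp : vp < 0 := by linarith
  have hmul : vm * vp = q := by rw [hv, div_mul_cancel₀ _ hvp.ne]
  have hpar : parallelConn vm vm = vp := hv ▸ parallelConn_div_self_of_root hvp.ne hroot
  have hvm : vm ≤ -1 := by
    rw [hv, div_le_iff_of_neg hvp]
    linarith
  refine ⟨?_, hpar, fun v hv => div_mem_Icc_of_mul_eq hmul hvp hv,
    fun v hv w hw => parallelConn_mem_Icc hvm hvp.le hpar hv hw,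
    fun v hv w hw => seriesConn_mem_Icc hq0.ne' hmul hvm hvp hpar hv hw⟩
  rw [seriesConn_eq_div_parallelConn_s17 hq0.ne' hvp.ne hvp.ne, ← hv, hpar, hv]

/-- Let `0 < q ≤ 32/27`, let `vp` be a real root of `v³ - 2qv - q² = 0` with
`-3q/4 ≤ vp < -q/2`, and set `vm = q/vp`.  Then:
(a) `vp ⋈_q vp = vm`; (b) `vm ∥ vm = vp`; (c) `[vm, vp]` is self-dual under `v ↦ q/v`;
(d) `[vm, vp]` is closed under `∥`; (e) `[vm, vp]` is closed under `⋈_q`. -/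
theorem diamond_interval_properties (q vp : ℝ) (hq0 : 0 < q) (hq : q ≤ 32 / 27)
    (hroot : vp ^ 3 - 2 * q * vp - q ^ 2 = 0) (hlb : -3 * q / 4 ≤ vp)
    (hub : vp < -q / 2) (vm : ℝ) (hv : vm = q / vp) :
    seriesConn q vp vp = vm ∧
    parallelConn vm vm = vp ∧
    (∀ v ∈ Set.Icc vm vp, q / v ∈ Set.Icc vm vp) ∧
    (∀ v ∈ Set.Icc vm vp, ∀ w ∈ Set.Icc vm vp, parallelConn v w ∈ Set.Icc vm vp) ∧
    (∀ v ∈ Set.Icc vm vp, ∀ w ∈ Set.Icc vm vp, seriesConn q v w ∈ Set.Icc vm vp) :=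
  diamond_interval_properties_general q vp hq0 hroot hlb hub vm hv
end

section
/- Let q > 0 and let V be a nonempty set of real numbers satisfying: (a) V ⊆ (−∞, 0); (b) if v ∈ V then v ∥ v ∈ V; (c) if v ∈ V then q + 2v ≠ 0 and v ⋈_q v ∈ V. Then q ≤ 32/27, and every v ∈ V satisfies v₋ ≤ v ≤ v₊, where v₊ is the unique real root of v³ − 2qv − q² = 0 in the interval [−3q/4, −q/2) and v₋ = q/v₊. -/
/-!
Every `v ∈ V` lies in `(-2, -q/2)`, and `V` is closed under the composites
`(v ⋈ v) ∥ (v ⋈ v) = v + v c(v) / (q + 2v)²` and `(v ∥ v) ⋈ (v ∥ v) = v + v b(v) / (q + 2(v ∥ v))`,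
where `c(v) = v³ - 2qv - q²` and `b(v) = v³ + 2v² - q`. Where `c < 0` the first map pushes `v` up
and where `b < 0` the second pushes it down, each time by an amount bounded away from zero along
the whole orbit (by compactness, or by monotonicity of `c` on `[-3q/4, -q/2]` and of `b` on
`(-∞, -4/3]`), so the bounded set `V` cannot contain such a point. If `q > 32/27` then `c < 0` on
all of `[-2, 0]`; in general `c < 0` on `(v₊, -q/2)`, and `b < 0` below its root `v₋ = q / v₊`.
-/

open Set

section Escape

variable {α : Type*} [AddCommGroup α] [LinearOrder α] [IsOrderedAddMonoid α]
  {s : Set α} {F : α → α} {a δ : α}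

theorem exists_mem_add_nsmul_le (hF : MapsTo F s s) (ha : a ∈ s) (hδ : 0 ≤ δ)
    (hstep : ∀ x ∈ s, a ≤ x → x + δ ≤ F x) (n : ℕ) : ∃ x ∈ s, a + n • δ ≤ x := by
  induction n with
  | zero => exact ⟨a, ha, by simp⟩
  | succ n ih =>
    obtain ⟨x, hx, hax⟩ := ih
    refine ⟨F x, hF hx, ?_⟩
    calc a + (n + 1) • δ = a + n • δ + δ := by rw [succ_nsmul, add_assoc]
      _ ≤ x + δ := by gcongr
      _ ≤ F x := hstep x hx ((le_add_of_nonneg_right (nsmul_nonneg hδ n)).trans hax)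

theorem not_bddAbove_of_forall_add_le [Archimedean α] (hF : MapsTo F s s) (ha : a ∈ s)
    (hδ : 0 < δ) (hstep : ∀ x ∈ s, a ≤ x → x + δ ≤ F x) : ¬BddAbove s := by
  rintro ⟨M, hM⟩
  obtain ⟨n, hn⟩ := Archimedean.arch (M - a) hδ
  obtain ⟨x, hx, hax⟩ := exists_mem_add_nsmul_le hF ha hδ.le hstep (n + 1)
  have hMx : M < x :=
    calc M ≤ a + n • δ := by rwa [sub_le_iff_le_add'] at hn
      _ < a + (n + 1) • δ := by rw [succ_nsmul, ← add_assoc]; exact lt_add_of_pos_right _ hδ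
      _ ≤ x := hax
  exact (hM hx).not_gt hMx

theorem not_bddBelow_of_forall_le_sub [Archimedean α] (hF : MapsTo F s s) (ha : a ∈ s)
    (hδ : 0 < δ) (hstep : ∀ x ∈ s, x ≤ a → F x ≤ x - δ) : ¬BddBelow s :=
  not_bddAbove_of_forall_add_le (α := αᵒᵈ) (δ := OrderDual.toDual (-δ)) hF ha (neg_pos.2 hδ)
    fun x hx hax => (sub_eq_add_neg (OrderDual.ofDual x) δ ▸ hstep x hx hax :
      F (OrderDual.ofDual x) ≤ OrderDual.ofDual x + -δ)

end Escape

def seriesCubic (q v : ℝ) : ℝ := v ^ 3 - 2 * q * v - q ^ 2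

def parallelCubic (q v : ℝ) : ℝ := v ^ 3 + 2 * v ^ 2 - q

theorem parallelConn_self (v : ℝ) : parallelConn v v = v * (v + 2) := by
  unfold parallelConn; ring

theorem seriesConn_self (q v : ℝ) : seriesConn q v v = v ^ 2 / (q + 2 * v) := by
  unfold seriesConn; ring_nf

theorem parallelConn_seriesConn_self {q v : ℝ} (h : q + 2 * v ≠ 0) :
    parallelConn (seriesConn q v v) (seriesConn q v v) =
      v + v * seriesCubic q v / (q + 2 * v) ^ 2 := by
  rw [parallelConn_self, seriesConn_self, div_add' _ _ _ h, div_mul_div_comm, ← sq,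
    add_div' _ _ _ (pow_ne_zero 2 h), seriesCubic]
  congr 1
  ring

theorem seriesConn_parallelConn_self {q v : ℝ} (h : q + 2 * parallelConn v v ≠ 0) :
    seriesConn q (parallelConn v v) (parallelConn v v) =
      v + v * parallelCubic q v / (q + 2 * parallelConn v v) := by
  rw [seriesConn_self, add_div' _ _ _ h, parallelConn_self, parallelCubic]
  congr 1
  ring

theorem add_le_parallelConn_seriesConn_self {q v C : ℝ} (hq : 0 < q) (hv : -2 < v)
    (hqv : q + 2 * v < 0) (hC : C ≤ -seriesCubic q v) (hC0 : 0 ≤ C) :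
    v + q * C / 32 ≤ parallelConn (seriesConn q v v) (seriesConn q v v) := by
  rw [parallelConn_seriesConn_self hqv.ne]
  have hden : 0 < (q + 2 * v) ^ 2 := sq_pos_of_neg hqv
  have hden16 : (q + 2 * v) ^ 2 ≤ 16 := by nlinarith
  have hnum : q / 2 * C ≤ v * seriesCubic q v := by
    nlinarith [mul_le_mul (show q / 2 ≤ -v by linarith) hC hC0 (by linarith)]
  have : q * C / 32 ≤ v * seriesCubic q v / (q + 2 * v) ^ 2 := by
    rw [div_le_div_iff₀ (by norm_num) hden]
    nlinarith [mul_le_mul hnum hden16 hden.le (by nlinarith)]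
  linarith

theorem seriesConn_parallelConn_self_le {q v B : ℝ} (hq : 0 ≤ q) (hv : v ≤ -4 / 3)
    (hD : q + 2 * parallelConn v v < 0) (hB : B ≤ -parallelCubic q v) (hB0 : 0 ≤ B) :
    seriesConn q (parallelConn v v) (parallelConn v v) ≤ v - 2 / 3 * B := by
  rw [seriesConn_parallelConn_self hD.ne]
  have hD2 : -2 ≤ q + 2 * parallelConn v v := by
    rw [parallelConn_self]; nlinarith [sq_nonneg (v + 1)]
  have hnum : 4 / 3 * B ≤ v * parallelCubic q v := by
    nlinarith [mul_le_mul (show 4 / 3 ≤ -v by linarith) hB hB0 (by linarith)]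
  have : v * parallelCubic q v / (q + 2 * parallelConn v v) ≤ -(2 / 3 * B) := by
    rw [div_le_iff_of_neg hD]
    nlinarith
  linarith

theorem seriesCubic_strictAntiOn {q : ℝ} (hq : q ≤ 32 / 27) :
    StrictAntiOn (seriesCubic q) (Icc (-3 * q / 4) (-q / 2)) := by
  rintro a ⟨ha₁, ha₂⟩ b ⟨hb₁, hb₂⟩ hab
  -- `a² + ab + b² < 3 (3q/4)² = 27q²/16 ≤ 2q`: this is where `32/27` comes from
  have hsq : a ^ 2 + a * b + b ^ 2 < 2 * q := by
    nlinarith [mul_nonneg (show 0 ≤ a + 3 * q / 4 by linarith) (show 0 ≤ -a by linarith),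
      mul_pos (sub_pos.2 hab) (show 0 < -a by linarith),
      mul_nonneg (show 0 ≤ b + 3 * q / 4 by linarith) (show 0 ≤ -b by linarith)]
  have : seriesCubic q b - seriesCubic q a = (b - a) * (a ^ 2 + a * b + b ^ 2 - 2 * q) := by
    unfold seriesCubic; ring
  nlinarith [mul_pos (sub_pos.2 hab) (sub_pos.2 hsq)]

theorem parallelCubic_strictMonoOn (q : ℝ) : StrictMonoOn (parallelCubic q) (Iic (-4 / 3)) := by
  rintro a (ha : a ≤ -4 / 3) b (hb : b ≤ -4 / 3) hab
  have hpos : 0 < a ^ 2 + a * b + b ^ 2 + 2 * (a + b) := by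
    nlinarith [mul_pos (sub_pos.2 hab) (sub_pos.2 hab),
      mul_nonneg (show 0 ≤ -(a + b) - 8 / 3 by linarith) (show 0 ≤ -(a + b) by linarith)]
  have : parallelCubic q b - parallelCubic q a =
      (b - a) * (a ^ 2 + a * b + b ^ 2 + 2 * (a + b)) := by
    unfold parallelCubic; ring
  nlinarith [mul_pos (sub_pos.2 hab) hpos]

theorem parallelCubic_div_eq_zero {q v : ℝ} (hv : v ≠ 0) (h : seriesCubic q v = 0) :
    parallelCubic q (q / v) = 0 := by
  have : parallelCubic q (q / v) = -q * seriesCubic q v / v ^ 3 := by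
    unfold parallelCubic seriesCubic; field_simp; ring
  rw [this, h, mul_zero, zero_div]

theorem seriesCubic_neg {q v : ℝ} (hq : 32 / 27 < q) (hv : v ≤ 0) :
    seriesCubic q v < 0 := by
  unfold seriesCubic
  nlinarith [sq_nonneg (v + 8 / 9), sq_nonneg (3 * v ^ 2 - 2 * q),
    mul_nonneg (mul_nonneg (neg_nonneg.2 hv) (neg_nonneg.2 hv)) (neg_nonneg.2 hv),
    sq_nonneg (q - 32 / 27), mul_nonneg (sq_nonneg (v + 8 / 9)) (neg_nonneg.2 hv),
    mul_pos (sub_pos.2 hq) (sub_pos.2 hq)]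

theorem exists_pos_forall_le_neg_seriesCubic {q : ℝ} (hq : 32 / 27 < q) :
    ∃ ε > 0, ∀ v ∈ Icc (-2 : ℝ) 0, ε ≤ -seriesCubic q v := by
  obtain ⟨v₀, hv₀, hmax⟩ :=
    isCompact_Icc.exists_isMaxOn (nonempty_Icc.2 (by norm_num : (-2 : ℝ) ≤ 0))
    (show Continuous (seriesCubic q) by unfold seriesCubic; fun_prop).continuousOn
  exact ⟨-seriesCubic q v₀, neg_pos.2 (seriesCubic_neg hq hv₀.2),
    fun v hv => neg_le_neg (hmax hv)⟩

structure DiamondClosed (q : ℝ) (V : Set ℝ) : Prop where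
  subset_Iio : V ⊆ Iio 0
  parallelConn_mem : ∀ v ∈ V, parallelConn v v ∈ V
  seriesConn_mem : ∀ v ∈ V, q + 2 * v ≠ 0 ∧ seriesConn q v v ∈ V

namespace DiamondClosed

variable {q : ℝ} {V : Set ℝ} {v : ℝ}

theorem lt_zero (hV : DiamondClosed q V) (hv : v ∈ V) : v < 0 := hV.subset_Iio hv

theorem neg_two_lt (hV : DiamondClosed q V) (hv : v ∈ V) : -2 < v := by
  have := hV.lt_zero (hV.parallelConn_mem v hv)
  rw [parallelConn_self] at this
  nlinarith [hV.lt_zero hv]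

theorem add_two_mul_lt_zero (hV : DiamondClosed q V) (hv : v ∈ V) : q + 2 * v < 0 := by
  have := hV.lt_zero (hV.seriesConn_mem v hv).2
  rw [seriesConn_self, div_neg_iff] at this
  rcases this with ⟨-, hden⟩ | ⟨hnum, -⟩
  · exact hden
  · exact absurd hnum (sq_pos_of_neg (hV.lt_zero hv)).not_gt

theorem bddAbove (hV : DiamondClosed q V) : BddAbove V := ⟨0, fun _ hv => (hV.lt_zero hv).le⟩

theorem bddBelow (hV : DiamondClosed q V) : BddBelow V :=
  ⟨-2, fun _ hv => (hV.neg_two_lt hv).le⟩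

theorem mapsTo_parallelConn_seriesConn (hV : DiamondClosed q V) :
    MapsTo (fun v => parallelConn (seriesConn q v v) (seriesConn q v v)) V V :=
  fun v hv => hV.parallelConn_mem _ (hV.seriesConn_mem v hv).2

theorem mapsTo_seriesConn_parallelConn (hV : DiamondClosed q V) :
    MapsTo (fun v => seriesConn q (parallelConn v v) (parallelConn v v)) V V :=
  fun v hv => (hV.seriesConn_mem _ (hV.parallelConn_mem v hv)).2

theorem le_32_div_27 (hq : 0 < q) (hV : DiamondClosed q V) (hne : V.Nonempty) :
    q ≤ 32 / 27 := by
  by_contra! hq32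
  obtain ⟨ε, hε, hcubic⟩ := exists_pos_forall_le_neg_seriesCubic hq32
  obtain ⟨v₀, hv₀⟩ := hne
  refine not_bddAbove_of_forall_add_le hV.mapsTo_parallelConn_seriesConn hv₀
    (by positivity : 0 < q * ε / 32) (fun v hv _ => ?_) hV.bddAbove
  exact add_le_parallelConn_seriesConn_self hq (hV.neg_two_lt hv) (hV.add_two_mul_lt_zero hv)
    (hcubic v ⟨(hV.neg_two_lt hv).le, (hV.lt_zero hv).le⟩) hε.le

theorem le_of_seriesCubic_eq_zero (hq : 0 < q) (hq32 : q ≤ 32 / 27) (hV : DiamondClosed q V)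
    {vp : ℝ} (hvp : -3 * q / 4 ≤ vp) (hroot : seriesCubic q vp = 0) (hv : v ∈ V) : v ≤ vp := by
  by_contra! hlt
  have hIcc : ∀ w ∈ V, vp ≤ w → w ∈ Icc (-3 * q / 4) (-q / 2) := fun w hw hvpw =>
    ⟨hvp.trans hvpw, by linarith [hV.add_two_mul_lt_zero hw]⟩
  have hvpIcc : vp ∈ Icc (-3 * q / 4) (-q / 2) := ⟨hvp, (hlt.trans_le (hIcc v hv hlt.le).2).le⟩
  have hneg : seriesCubic q v < 0 :=
    hroot ▸ seriesCubic_strictAntiOn hq32 hvpIcc (hIcc v hv hlt.le) hlt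
  refine not_bddAbove_of_forall_add_le hV.mapsTo_parallelConn_seriesConn hv
    (by nlinarith : 0 < q * -seriesCubic q v / 32) (fun w hw hvw => ?_) hV.bddAbove
  have hle : -seriesCubic q v ≤ -seriesCubic q w := neg_le_neg <|
    (seriesCubic_strictAntiOn hq32).antitoneOn (hIcc v hv hlt.le) (hIcc w hw (hlt.le.trans hvw)) hvw
  exact add_le_parallelConn_seriesConn_self hq (hV.neg_two_lt hw) (hV.add_two_mul_lt_zero hw) hle
    (neg_nonneg.2 hneg.le)

theorem div_le_of_seriesCubic_eq_zero (hq : 0 < q) (hV : DiamondClosed q V) {vp : ℝ}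
    (hvp : -3 * q / 4 ≤ vp) (hvp0 : vp < 0) (hroot : seriesCubic q vp = 0) (hv : v ∈ V) :
    q / vp ≤ v := by
  by_contra! hlt
  have hvm : q / vp ≤ -4 / 3 := by rw [div_le_iff_of_neg hvp0]; linarith
  have hv43 : v ≤ -4 / 3 := hlt.le.trans hvm
  have hneg : parallelCubic q v < 0 :=
    parallelCubic_div_eq_zero hvp0.ne hroot ▸ parallelCubic_strictMonoOn q hv43 hvm hlt
  refine not_bddBelow_of_forall_le_sub hV.mapsTo_seriesConn_parallelConn hv
    (by linarith : 0 < 2 / 3 * -parallelCubic q v) (fun w hw hwv => ?_) hV.bddBelow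
  have hle : -parallelCubic q v ≤ -parallelCubic q w := neg_le_neg <|
    (parallelCubic_strictMonoOn q).monotoneOn (hwv.trans hv43) hv43 hwv
  exact seriesConn_parallelConn_self_le hq.le (hwv.trans hv43)
    (hV.add_two_mul_lt_zero (hV.parallelConn_mem w hw)) hle (neg_nonneg.2 hneg.le)

end DiamondClosed

/-- Let `q > 0` and let `V` be a nonempty set of negative reals closed under
`v ↦ v ∥ v` and `v ↦ v ⋈_q v` (the latter being well defined, `q + 2v ≠ 0`).
Then `q ≤ 32/27` and `V ⊆ [vm, vp]`, where `vp` is the unique real root of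
`v³ - 2qv - q² = 0` in `[-3q/4, -q/2)` and `vm = q/vp`. -/
theorem diamond_necessary_condition (q : ℝ) (hq : 0 < q) (V : Set ℝ)
    (hne : V.Nonempty) (hneg : V ⊆ Set.Iio 0)
    (hpar : ∀ v ∈ V, parallelConn v v ∈ V)
    (hser : ∀ v ∈ V, q + 2 * v ≠ 0 ∧ seriesConn q v v ∈ V) :
    q ≤ 32 / 27 ∧
    ∀ vp : ℝ, -3 * q / 4 ≤ vp → vp < -q / 2 → vp ^ 3 - 2 * q * vp - q ^ 2 = 0 →
      ∀ v ∈ V, q / vp ≤ v ∧ v ≤ vp := by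
  have hV : DiamondClosed q V := ⟨hneg, hpar, hser⟩
  have hq32 := hV.le_32_div_27 hq hne
  refine ⟨hq32, fun vp hvp hvp2 hroot v hv => ⟨?_, ?_⟩⟩
  · exact hV.div_le_of_seriesCubic_eq_zero hq hvp (by linarith) hroot hv
  · exact hV.le_of_seriesCubic_eq_zero hq hq32 hvp hroot hv
end
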